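/- arXiv:1712.04969 — 4 statements merged into one kernel-verified Lean document; each statement's English description precedes it below -/
import Mathlib

section
/- Suppose the coefficient functions b̄₁ and b₁ are even, c₁ = 1/2, and for ν ∈ {0, hω} one has cos(ν/2) ≠ 0 and (1 + cos ν)·b̄₁(ν) = sinc(ν)·b₁(ν) (the symmetry condition). Then for every continuous g : ℝ^d → ℝ^d the one-stage explicit ERKN integrator is symmetric, i.e. for every (q,p) ∈ ℝ^d × ℝ^d one has Φ_{−h}(Φ_h(q,p)) = (q,p), where Φ_{−h} denotes the same scheme with the stepsize h replaced by −h. -/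
noncomputable section

/-- The (unnormalized) sinc function: `sinc x = sin x / x` for `x ≠ 0`, `sinc 0 = 1`. -/
def rsinc (x : ℝ) : ℝ := if x = 0 then 1 else Real.sin x / x

/-- Real coordinate space `ℝ^d` with the Euclidean norm. -/
abbrev Vec (d : ℕ) : Type := EuclideanSpace ℝ (Fin d)

/-- Block-diagonal scalar operator: multiplies the first `d₁` coordinates by `a`
and the remaining `d₂` coordinates by `b`.  This realizes `f(hΩ)` for
`Ω = diag(0·I_{d₁}, ω·I_{d₂})`, with `a = f 0` and `b = f (hω)`. -/
def bop (d₁ d₂ : ℕ) (a b : ℝ) (v : Vec (d₁ + d₂)) : Vec (d₁ + d₂) :=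
  WithLp.toLp 2 (fun i : Fin (d₁ + d₂) => (if (i : ℕ) < d₁ then a else b) * v i)

/-- One-stage explicit ERKN integrator `Φ_h` for `q'' + Ω²q = g(q)`:
`Q = cos(c₁hΩ)q + c₁h·sinc(c₁hΩ)p`,
`q⁺ = cos(hΩ)q + h·sinc(hΩ)p + h²·b̄₁(hΩ)g(Q)`,
`p⁺ = −hΩ²·sinc(hΩ)q + cos(hΩ)p + h·b₁(hΩ)g(Q)`. -/
def erkn (d₁ d₂ : ℕ) (h ω c₁ : ℝ) (bbar b₁ : ℝ → ℝ)
    (g : Vec (d₁ + d₂) → Vec (d₁ + d₂)) (x : Vec (d₁ + d₂) × Vec (d₁ + d₂)) :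
    Vec (d₁ + d₂) × Vec (d₁ + d₂) :=
  let q := x.1
  let p := x.2
  let Q := bop d₁ d₂ (Real.cos (c₁ * (h * 0))) (Real.cos (c₁ * (h * ω))) q
         + bop d₁ d₂ (c₁ * h * rsinc (c₁ * (h * 0))) (c₁ * h * rsinc (c₁ * (h * ω))) p
  ( bop d₁ d₂ (Real.cos (h * 0)) (Real.cos (h * ω)) q
    + bop d₁ d₂ (h * rsinc (h * 0)) (h * rsinc (h * ω)) p
    + bop d₁ d₂ (h ^ 2 * bbar (h * 0)) (h ^ 2 * bbar (h * ω)) (g Q),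
    bop d₁ d₂ (-(h * 0 ^ 2 * rsinc (h * 0))) (-(h * ω ^ 2 * rsinc (h * ω))) q
    + bop d₁ d₂ (Real.cos (h * 0)) (Real.cos (h * ω)) p
    + bop d₁ d₂ (h * b₁ (h * 0)) (h * b₁ (h * ω)) (g Q) )

/-! Apart from the force `g Q`, every coordinate evolves on its own with its frequency
(`0` or `ω`), and its linear part is the exact, hence reversible, flow of `q'' = -w²q`.
The half-angle formulas show that the internal stage of the backward step started at
`Φ_h(q,p)` is the stage `Q` of the forward step, so both steps use the same force value
`G = g Q`. The symmetry condition then cancels the force terms: directly in `q`, and in `p`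
through `x sin x · b̄₁(x) = (1 - cos x) b₁(x)`, obtained by dividing by
`1 + cos x = 2 cos² (x/2) ≠ 0`. -/

open Real

lemma rsinc_eq_sinc : rsinc = sinc := rfl

namespace Real

lemma mul_sinc (x : ℝ) : x * sinc x = sin x := by
  rcases eq_or_ne x 0 with rfl | hx
  · simp
  · rw [sinc_of_ne_zero hx]
    field_simp

lemma one_add_cos_eq_two_mul_cos_half_sq (x : ℝ) : 1 + cos x = 2 * cos (x / 2) ^ 2 := by
  rw [cos_sq, mul_div_cancel₀ x two_ne_zero]
  ring

lemma sinc_eq_cos_half_mul_sinc_half (x : ℝ) : sinc x = cos (x / 2) * sinc (x / 2) := by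
  rcases eq_or_ne x 0 with rfl | hx
  · simp
  · have hx2 : x / 2 ≠ 0 := div_ne_zero hx two_ne_zero
    have hsin : sin x = 2 * sin (x / 2) * cos (x / 2) := by
      rw [← sin_two_mul, mul_div_cancel₀ x two_ne_zero]
    rw [sinc_of_ne_zero hx, sinc_of_ne_zero hx2, hsin]
    field_simp

end Real

section SymmetryCondition

variable {x Bb B : ℝ}

lemma two_mul_cos_half_mul_eq_sinc_half_mul (hcos : cos (x / 2) ≠ 0)
    (hsym : (1 + cos x) * Bb = sinc x * B) : 2 * cos (x / 2) * Bb = sinc (x / 2) * B := by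
  refine mul_left_cancel₀ hcos ?_
  rw [one_add_cos_eq_two_mul_cos_half_sq, sinc_eq_cos_half_mul_sinc_half] at hsym
  linear_combination hsym

lemma mul_sin_mul_eq_one_sub_cos_mul (hcos : cos (x / 2) ≠ 0)
    (hsym : (1 + cos x) * Bb = sinc x * B) : x * sin x * Bb = (1 - cos x) * B := by
  have hpos : 1 + cos x ≠ 0 := by
    rw [one_add_cos_eq_two_mul_cos_half_sq]
    positivity
  refine mul_left_cancel₀ hpos ?_
  linear_combination (x * sin x) * hsym + B * sin_sq_add_cos_sq x + B * sin x * mul_sinc x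

end SymmetryCondition

/-- One coordinate of `erkn` with frequency `w`; `G` is that coordinate of the force `g Q`,
the only term coupling the coordinates. -/
def erknCoord (h w : ℝ) (bbar b₁ : ℝ → ℝ) (G : ℝ) (z : ℝ × ℝ) : ℝ × ℝ :=
  (cos (h * w) * z.1 + h * sinc (h * w) * z.2 + h ^ 2 * bbar (h * w) * G,
   -(w * sin (h * w)) * z.1 + cos (h * w) * z.2 + h * b₁ (h * w) * G)

def erknStageCoord (h w c₁ : ℝ) (z : ℝ × ℝ) : ℝ :=
  cos (c₁ * (h * w)) * z.1 + c₁ * h * sinc (c₁ * (h * w)) * z.2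

section SymmetricCoordinate

variable {h w : ℝ} {bbar b₁ : ℝ → ℝ}

lemma erknStageCoord_neg_erknCoord (hcos : cos (h * w / 2) ≠ 0)
    (hsym : (1 + cos (h * w)) * bbar (h * w) = sinc (h * w) * b₁ (h * w)) (G : ℝ) (z : ℝ × ℝ) :
    erknStageCoord (-h) w (1 / 2) (erknCoord h w bbar b₁ G z) = erknStageCoord h w (1 / 2) z := by
  have hhalf := two_mul_cos_half_mul_eq_sinc_half_mul hcos hsym
  have hx : 1 / 2 * (h * w) = h * w / 2 := by ring
  simp only [erknStageCoord, erknCoord, neg_mul, mul_neg, cos_neg, sinc_neg, hx]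
  have hcos_sub :
      cos (h * w / 2) = cos (h * w) * cos (h * w / 2) + sin (h * w) * sin (h * w / 2) := by
    rw [← cos_sub]; ring_nf
  have hsin_half := mul_sinc (h * w / 2)
  rw [sinc_eq_cos_half_mul_sinc_half (h * w)]
  linear_combination (G * h ^ 2 / 2) * hhalf - z.1 * hcos_sub + z.1 * sin (h * w) * hsin_half
    - (h * sinc (h * w / 2) * z.2 / 2) * one_add_cos_eq_two_mul_cos_half_sq (h * w)

lemma erknCoord_neg_erknCoord (hbbar : bbar (-(h * w)) = bbar (h * w))
    (hb₁ : b₁ (-(h * w)) = b₁ (h * w)) (hcos : cos (h * w / 2) ≠ 0)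
    (hsym : (1 + cos (h * w)) * bbar (h * w) = sinc (h * w) * b₁ (h * w)) (G : ℝ) (z : ℝ × ℝ) :
    erknCoord (-h) w bbar b₁ G (erknCoord h w bbar b₁ G z) = z := by
  have hsin := mul_sin_mul_eq_one_sub_cos_mul hcos hsym
  simp only [erknCoord, neg_mul, mul_neg, cos_neg, sinc_neg, sin_neg, hbbar, hb₁, neg_neg]
  ext
  · linear_combination (G * h ^ 2) * hsym + z.1 * sin_sq_add_cos_sq (h * w)
      + z.1 * sin (h * w) * mul_sinc (h * w)
  · linear_combination (G * h) * hsin + z.2 * sin_sq_add_cos_sq (h * w)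
      + z.2 * sin (h * w) * mul_sinc (h * w)

end SymmetricCoordinate

def blockFreq (d₁ : ℕ) (ω : ℝ) {n : ℕ} (i : Fin n) : ℝ := if (i : ℕ) < d₁ then 0 else ω

lemma mul_blockFreq_mem {d₁ n : ℕ} (h ω : ℝ) (i : Fin n) :
    h * blockFreq d₁ ω i ∈ ({0, h * ω} : Set ℝ) := by
  unfold blockFreq
  split_ifs <;> simp

def erknStage (d₁ d₂ : ℕ) (h ω c₁ : ℝ) (x : Vec (d₁ + d₂) × Vec (d₁ + d₂)) : Vec (d₁ + d₂) :=
  bop d₁ d₂ (Real.cos (c₁ * (h * 0))) (Real.cos (c₁ * (h * ω))) x.1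
    + bop d₁ d₂ (c₁ * h * rsinc (c₁ * (h * 0))) (c₁ * h * rsinc (c₁ * (h * ω))) x.2

section Coordinates

variable {d₁ d₂ : ℕ} {h ω c₁ : ℝ} {bbar b₁ : ℝ → ℝ} {g : Vec (d₁ + d₂) → Vec (d₁ + d₂)}

lemma bop_apply (a b : ℝ) (v : Vec (d₁ + d₂)) (i : Fin (d₁ + d₂)) :
    bop d₁ d₂ a b v i = (if (i : ℕ) < d₁ then a else b) * v i := rfl

lemma erkn_eq (x : Vec (d₁ + d₂) × Vec (d₁ + d₂)) :
    erkn d₁ d₂ h ω c₁ bbar b₁ g x =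
      (bop d₁ d₂ (Real.cos (h * 0)) (Real.cos (h * ω)) x.1
        + bop d₁ d₂ (h * rsinc (h * 0)) (h * rsinc (h * ω)) x.2
        + bop d₁ d₂ (h ^ 2 * bbar (h * 0)) (h ^ 2 * bbar (h * ω)) (g (erknStage d₁ d₂ h ω c₁ x)),
      bop d₁ d₂ (-(h * 0 ^ 2 * rsinc (h * 0))) (-(h * ω ^ 2 * rsinc (h * ω))) x.1
        + bop d₁ d₂ (Real.cos (h * 0)) (Real.cos (h * ω)) x.2
        + bop d₁ d₂ (h * b₁ (h * 0)) (h * b₁ (h * ω)) (g (erknStage d₁ d₂ h ω c₁ x))) := rfl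

lemma erknStage_apply (x : Vec (d₁ + d₂) × Vec (d₁ + d₂)) (i : Fin (d₁ + d₂)) :
    erknStage d₁ d₂ h ω c₁ x i = erknStageCoord h (blockFreq d₁ ω i) c₁ (x.1 i, x.2 i) := by
  by_cases hi : (i : ℕ) < d₁ <;>
    simp [erknStage, erknStageCoord, blockFreq, bop_apply, hi, rsinc_eq_sinc]

lemma erkn_apply (x : Vec (d₁ + d₂) × Vec (d₁ + d₂)) (i : Fin (d₁ + d₂)) :
    ((erkn d₁ d₂ h ω c₁ bbar b₁ g x).1 i, (erkn d₁ d₂ h ω c₁ bbar b₁ g x).2 i) =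
      erknCoord h (blockFreq d₁ ω i) bbar b₁ (g (erknStage d₁ d₂ h ω c₁ x) i) (x.1 i, x.2 i) := by
  have hsin : h * ω ^ 2 * sinc (h * ω) = ω * sin (h * ω) := by
    rw [← mul_sinc]; ring
  rw [erkn_eq]
  by_cases hi : (i : ℕ) < d₁ <;>
    simp [erknCoord, blockFreq, bop_apply, hi, rsinc_eq_sinc, hsin]

end Coordinates

theorem erkn_symmetric_general (d₁ d₂ : ℕ) (h ω : ℝ)
    (bbar b₁ : ℝ → ℝ)
    (hbbar_even : ∀ ν : ℝ, bbar (-ν) = bbar ν) (hb₁_even : ∀ ν : ℝ, b₁ (-ν) = b₁ ν)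
    (hcos : ∀ ν ∈ ({0, h * ω} : Set ℝ), Real.cos (ν / 2) ≠ 0)
    (hsym : ∀ ν ∈ ({0, h * ω} : Set ℝ), (1 + Real.cos ν) * bbar ν = rsinc ν * b₁ ν)
    (g : Vec (d₁ + d₂) → Vec (d₁ + d₂))
    (q p : Vec (d₁ + d₂)) :
    erkn d₁ d₂ (-h) ω (1/2) bbar b₁ g (erkn d₁ d₂ h ω (1/2) bbar b₁ g (q, p)) = (q, p) := by
  set x := erkn d₁ d₂ h ω (1/2) bbar b₁ g (q, p)
  have hstage : erknStage d₁ d₂ (-h) ω (1/2) x = erknStage d₁ d₂ h ω (1/2) (q, p) := by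
    ext i
    have hν := mul_blockFreq_mem (d₁ := d₁) h ω i
    rw [erknStage_apply, erknStage_apply, erkn_apply]
    exact erknStageCoord_neg_erknCoord (hcos _ hν) (hsym _ hν) _ _
  suffices hcoord : ∀ i, ((erkn d₁ d₂ (-h) ω (1/2) bbar b₁ g x).1 i,
      (erkn d₁ d₂ (-h) ω (1/2) bbar b₁ g x).2 i) = (q i, p i) by
    ext i
    exacts [congrArg Prod.fst (hcoord i), congrArg Prod.snd (hcoord i)]
  intro i
  have hν := mul_blockFreq_mem (d₁ := d₁) h ω i
  rw [erkn_apply, hstage, erkn_apply]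
  exact erknCoord_neg_erknCoord (hbbar_even _) (hb₁_even _) (hcos _ hν) (hsym _ hν) _ _

/-- Under the symmetry condition, the one-stage explicit ERKN
integrator is symmetric: `Φ_{−h} ∘ Φ_h = id`. -/
theorem erkn_symmetric (d₁ d₂ : ℕ) (h ω : ℝ) (hh : 0 < h) (hω : 0 < ω)
    (bbar b₁ : ℝ → ℝ)
    (hbbar_even : ∀ ν : ℝ, bbar (-ν) = bbar ν) (hb₁_even : ∀ ν : ℝ, b₁ (-ν) = b₁ ν)
    (hcos : ∀ ν ∈ ({0, h * ω} : Set ℝ), Real.cos (ν / 2) ≠ 0)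
    (hsym : ∀ ν ∈ ({0, h * ω} : Set ℝ), (1 + Real.cos ν) * bbar ν = rsinc ν * b₁ ν)
    (g : Vec (d₁ + d₂) → Vec (d₁ + d₂)) (hg : Continuous g)
    (q p : Vec (d₁ + d₂)) :
    erkn d₁ d₂ (-h) ω (1/2) bbar b₁ g (erkn d₁ d₂ h ω (1/2) bbar b₁ g (q, p)) = (q, p) :=
  erkn_symmetric_general d₁ d₂ h ω bbar b₁ hbbar_even hb₁_even hcos hsym g q p
end
end

section
/- For every real stepsize h, every function Υ : ℝ → ℝ, every g : ℝ^d → ℝ^d and every (q,p) ∈ ℝ^d × ℝ^d, the composition Φ_{h/2,NL}(Φ_{h,L}(Φ_{h/2,NL}(q,p))) equals (q⁺,p⁺), where q⁺ = cos(hΩ)q + h·sinc(hΩ)p + (1/2)h²·sinc(hΩ)Υ(hΩ)g(q) and p⁺ = −hΩ²·sinc(hΩ)q + cos(hΩ)p + (1/2)h·(cos(hΩ)Υ(hΩ)g(q) + Υ(hΩ)g(q⁺)); that is, this Strang splitting is exactly the trigonometric integrator Φ̂_h with filter functions Φ = 1, Ψ = sinc·Υ, Ψ₀ = cos·Υ,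 Ψ₁ = Υ. -/
noncomputable section

/-- Exact time-`t` flow `Φ_{t,L}` of the linear equation `q̇ = p`, `ṗ = −Ω²q`. -/
def phiL (d₁ d₂ : ℕ) (ω t : ℝ) (x : Vec (d₁ + d₂) × Vec (d₁ + d₂)) :
    Vec (d₁ + d₂) × Vec (d₁ + d₂) :=
  ( bop d₁ d₂ (Real.cos (t * 0)) (Real.cos (t * ω)) x.1
    + bop d₁ d₂ (t * rsinc (t * 0)) (t * rsinc (t * ω)) x.2,
    bop d₁ d₂ (-(t * 0 ^ 2 * rsinc (t * 0))) (-(t * ω ^ 2 * rsinc (t * ω))) x.1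
    + bop d₁ d₂ (Real.cos (t * 0)) (Real.cos (t * ω)) x.2 )

/-- Time-`t` flow `Φ_{t,NL}` of the nonlinear equation `q̇ = 0`, `ṗ = Υ(hΩ)g(q)`. -/
def phiNL (d₁ d₂ : ℕ) (h ω : ℝ) (Υ : ℝ → ℝ) (g : Vec (d₁ + d₂) → Vec (d₁ + d₂))
    (t : ℝ) (x : Vec (d₁ + d₂) × Vec (d₁ + d₂)) :
    Vec (d₁ + d₂) × Vec (d₁ + d₂) :=
  (x.1, x.2 + bop d₁ d₂ (t * Υ (h * 0)) (t * Υ (h * ω)) (g x.1))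

/-- The trigonometric integrator `Φ̂_h` with filter functions `Φ = 1`, `Ψ = sinc·Υ`,
`Ψ₀ = cos·Υ`, `Ψ₁ = Υ`. -/
def trig (d₁ d₂ : ℕ) (ω : ℝ) (Υ : ℝ → ℝ) (g : Vec (d₁ + d₂) → Vec (d₁ + d₂))
    (h : ℝ) (x : Vec (d₁ + d₂) × Vec (d₁ + d₂)) :
    Vec (d₁ + d₂) × Vec (d₁ + d₂) :=
  let q := x.1
  let p := x.2
  let qplus := bop d₁ d₂ (Real.cos (h * 0)) (Real.cos (h * ω)) q
      + bop d₁ d₂ (h * rsinc (h * 0)) (h * rsinc (h * ω)) p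
      + bop d₁ d₂ ((1/2) * h ^ 2 * rsinc (h * 0) * Υ (h * 0))
          ((1/2) * h ^ 2 * rsinc (h * ω) * Υ (h * ω)) (g q)
  ( qplus,
    bop d₁ d₂ (-(h * 0 ^ 2 * rsinc (h * 0))) (-(h * ω ^ 2 * rsinc (h * ω))) q
    + bop d₁ d₂ (Real.cos (h * 0)) (Real.cos (h * ω)) p
    + bop d₁ d₂ ((1/2) * h * Real.cos (h * 0) * Υ (h * 0))
        ((1/2) * h * Real.cos (h * ω) * Υ (h * ω)) (g q)
    + bop d₁ d₂ ((1/2) * h * Υ (h * 0)) ((1/2) * h * Υ (h * ω)) (g qplus) )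

/-! The linear flow `Φ_{h,L}` is linear, so the first half kick `(h/2)Υ(hΩ)g(q)` passes through
it as `(h sinc(hΩ), cos(hΩ))` times the kick; the second half kick is then evaluated at the new
position `q⁺`. Since all operators are block-diagonal scalars, what remains is matching the scalar
coefficients on each block. -/

section BlockOperator

variable {d₁ d₂ : ℕ}

theorem bop_add (a b : ℝ) (v w : Vec (d₁ + d₂)) :
    bop d₁ d₂ a b (v + w) = bop d₁ d₂ a b v + bop d₁ d₂ a b w := by
  ext i
  simp only [bop, PiLp.add_apply, PiLp.toLp_apply, mul_add]

theorem bop_bop (a b a' b' : ℝ) (v : Vec (d₁ + d₂)) :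
    bop d₁ d₂ a b (bop d₁ d₂ a' b' v) = bop d₁ d₂ (a * a') (b * b') v := by
  ext i
  simp only [bop, PiLp.toLp_apply]
  split_ifs <;> ring

end BlockOperator

theorem phiL_add_momentum {d₁ d₂ : ℕ} (ω t : ℝ) (q p k : Vec (d₁ + d₂)) :
    phiL d₁ d₂ ω t (q, p + k) =
      ((phiL d₁ d₂ ω t (q, p)).1 + bop d₁ d₂ (t * rsinc (t * 0)) (t * rsinc (t * ω)) k,
       (phiL d₁ d₂ ω t (q, p)).2 + bop d₁ d₂ (Real.cos (t * 0)) (Real.cos (t * ω)) k) := by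
  simp only [phiL, bop_add, add_assoc]

theorem strang_eq_trig_general (d₁ d₂ : ℕ) (ω : ℝ) (h : ℝ) (Υ : ℝ → ℝ)
    (g : Vec (d₁ + d₂) → Vec (d₁ + d₂)) (q p : Vec (d₁ + d₂)) :
    phiNL d₁ d₂ h ω Υ g (h/2) (phiL d₁ d₂ ω h (phiNL d₁ d₂ h ω Υ g (h/2) (q, p)))
      = trig d₁ d₂ ω Υ g h (q, p) := by
  have hqplus : (phiL d₁ d₂ ω h (phiNL d₁ d₂ h ω Υ g (h/2) (q, p))).1
      = (trig d₁ d₂ ω Υ g h (q, p)).1 := by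
    simp only [phiNL, phiL_add_momentum, bop_bop]
    congr 2 <;> ring
  refine Prod.ext hqplus ?_
  simp only [phiNL] at hqplus ⊢
  rw [hqplus]
  simp only [phiL_add_momentum, bop_bop]
  simp only [phiL, trig, add_assoc]
  congr 4 <;> ring

/-- The Strang splitting `Φ_{h/2,NL} ∘ Φ_{h,L} ∘ Φ_{h/2,NL}` is exactly
the trigonometric integrator with filters `Φ = 1`, `Ψ = sinc·Υ`, `Ψ₀ = cos·Υ`, `Ψ₁ = Υ`. -/
theorem strang_eq_trig (d₁ d₂ : ℕ) (ω : ℝ) (hω : 0 < ω) (h : ℝ) (Υ : ℝ → ℝ)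
    (g : Vec (d₁ + d₂) → Vec (d₁ + d₂)) (q p : Vec (d₁ + d₂)) :
    phiNL d₁ d₂ h ω Υ g (h/2) (phiL d₁ d₂ ω h (phiNL d₁ d₂ h ω Υ g (h/2) (q, p)))
      = trig d₁ d₂ ω Υ g h (q, p) :=
  strang_eq_trig_general d₁ d₂ ω h Υ g q p
end
end

section
/- Suppose c₁ = 1/2 and the function Υ : ℝ → ℝ satisfies (1/2)·sinc(ν/2)·Υ(ν) = b̄₁(ν) and cos(ν/2)·Υ(ν) = b₁(ν) for ν ∈ {0, hω}. Then for every g : ℝ^d → ℝ^d, every integer j ≥ 0 and every (q⁰,p⁰) ∈ ℝ^d × ℝ^d, one has Φ̂_h^j(Φ_{h/2,NL}(Φ_{h/2,L}(q⁰,p⁰))) = Φ_{h/2,NL}(Φ_{h/2,L}(Φ_h^j(q⁰,p⁰))), where Φ̂_h = Φ_{h/2,NL} ∘ Φ_{h,L} ∘ Φ_{h/2,NL} and Φ_h is the ERKN integrator. -/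
noncomputable section

lemma rsinc_zero : rsinc 0 = 1 := if_pos rfl

lemma mul_rsinc (x : ℝ) : x * rsinc x = Real.sin x := by
  rcases eq_or_ne x 0 with rfl | hx
  · simp [rsinc]
  · rw [rsinc, if_neg hx]; field_simp

lemma rsinc_two_mul (x : ℝ) : rsinc (2 * x) = Real.cos x * rsinc x := by
  rcases eq_or_ne x 0 with rfl | hx
  · simp [rsinc]
  · have h2 : (2:ℝ) * x ≠ 0 := mul_ne_zero two_ne_zero hx
    rw [rsinc, rsinc, if_neg h2, if_neg hx, Real.sin_two_mul]
    field_simp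

lemma cos_eq (h ω : ℝ) : Real.cos (h * ω)
    = Real.cos (h*ω/2)^2 - (h*ω/2 * rsinc (h*ω/2))^2 := by
  rw [mul_rsinc (h*ω/2), ← Real.cos_two_mul' (h*ω/2)]
  congr 1; ring

lemma rsinc_eq (h ω : ℝ) : rsinc (h * ω) = Real.cos (h*ω/2) * rsinc (h*ω/2) := by
  rw [← rsinc_two_mul (h*ω/2)]
  congr 1; ring

lemma vecQ (d₁ d₂ : ℕ) (h ω : ℝ) (q p : Vec (d₁+d₂)) :
    bop d₁ d₂ (Real.cos (h/2 * 0)) (Real.cos (h/2 * ω)) q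
      + bop d₁ d₂ (h/2 * rsinc (h/2 * 0)) (h/2 * rsinc (h/2 * ω)) p
    = bop d₁ d₂ (Real.cos (1/2 * (h * 0))) (Real.cos (1/2 * (h * ω))) q
      + bop d₁ d₂ (1/2 * h * rsinc (1/2 * (h * 0))) (1/2 * h * rsinc (1/2 * (h * ω))) p := by
  ext i
  by_cases hi : (i:ℕ) < d₁
  · simp only [PiLp.add_apply, bop, PiLp.toLp_apply, if_pos hi, mul_zero, zero_mul, rsinc_zero,
      Real.cos_zero]
    ring
  · simp only [PiLp.add_apply, bop, PiLp.toLp_apply, if_neg hi]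
    rw [show h/2*ω = 1/2*(h*ω) from by ring]; ring

lemma keystep (d₁ d₂ : ℕ) (h ω : ℝ) (bbar b₁ Υ : ℝ → ℝ)
    (h1 : bbar 0 = 1/2 * Υ 0) (h2 : bbar (h*ω) = 1/2 * rsinc (h*ω/2) * Υ (h*ω))
    (h3 : b₁ 0 = Υ 0) (h4 : b₁ (h*ω) = Real.cos (h*ω/2) * Υ (h*ω))
    (g : Vec (d₁ + d₂) → Vec (d₁ + d₂)) (x : Vec (d₁ + d₂) × Vec (d₁ + d₂)) :
    phiL d₁ d₂ ω h (phiNL d₁ d₂ h ω Υ g (h/2) (phiNL d₁ d₂ h ω Υ g (h/2)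
        (phiL d₁ d₂ ω (h/2) x)))
      = phiL d₁ d₂ ω (h/2) (erkn d₁ d₂ h ω (1/2) bbar b₁ g x) := by
  obtain ⟨q, p⟩ := x
  simp only [phiL, phiNL, erkn]
  rw [vecQ d₁ d₂ h ω q p]
  refine Prod.ext ?_ ?_
  · ext i
    by_cases hi : (i:ℕ) < d₁
    · simp only [PiLp.add_apply, bop, PiLp.toLp_apply, if_pos hi, mul_zero, zero_mul, rsinc_zero,
        Real.cos_zero, h1, h3]
      ring
    · simp only [PiLp.add_apply, bop, PiLp.toLp_apply, if_neg hi, mul_zero, zero_mul, rsinc_zero,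
        Real.cos_zero]
      rw [show h/2*ω = h*ω/2 from by ring, show 1/2*(h*ω) = h*ω/2 from by ring,
        h2, h4, cos_eq h ω, rsinc_eq h ω]
      ring
  · ext i
    by_cases hi : (i:ℕ) < d₁
    · simp only [PiLp.add_apply, bop, PiLp.toLp_apply, if_pos hi, mul_zero, zero_mul, rsinc_zero,
        Real.cos_zero, h1, h3]
      ring
    · simp only [PiLp.add_apply, bop, PiLp.toLp_apply, if_neg hi, mul_zero, zero_mul, rsinc_zero,
        Real.cos_zero]
      rw [show h/2*ω = h*ω/2 from by ring, show 1/2*(h*ω) = h*ω/2 from by ring,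
        h2, h4, cos_eq h ω, rsinc_eq h ω]
      ring

/-- For every `j ≥ 0`,
`Φ̂_h^j ∘ Φ_{h/2,NL} ∘ Φ_{h/2,L} = Φ_{h/2,NL} ∘ Φ_{h/2,L} ∘ Φ_h^j`. -/
theorem trig_iterate_comm (d₁ d₂ : ℕ) (h ω : ℝ) (hh : 0 < h) (hω : 0 < ω)
    (bbar b₁ Υ : ℝ → ℝ)
    (hΥ₁ : ∀ ν ∈ ({0, h * ω} : Set ℝ), (1/2) * rsinc (ν / 2) * Υ ν = bbar ν)
    (hΥ₂ : ∀ ν ∈ ({0, h * ω} : Set ℝ), Real.cos (ν / 2) * Υ ν = b₁ ν)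
    (g : Vec (d₁ + d₂) → Vec (d₁ + d₂)) (j : ℕ) :
    let Φhat : Vec (d₁ + d₂) × Vec (d₁ + d₂) → Vec (d₁ + d₂) × Vec (d₁ + d₂) :=
      fun y => phiNL d₁ d₂ h ω Υ g (h/2) (phiL d₁ d₂ ω h (phiNL d₁ d₂ h ω Υ g (h/2) y))
    ∀ x₀ : Vec (d₁ + d₂) × Vec (d₁ + d₂),
      Φhat^[j] (phiNL d₁ d₂ h ω Υ g (h/2) (phiL d₁ d₂ ω (h/2) x₀))
        = phiNL d₁ d₂ h ω Υ g (h/2) (phiL d₁ d₂ ω (h/2)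
            ((erkn d₁ d₂ h ω (1/2) bbar b₁ g)^[j] x₀)) := by
  have h1 : bbar 0 = 1/2 * Υ 0 := by
    have := hΥ₁ 0 (by simp)
    rw [← this]; norm_num [rsinc_zero]
  have h2 : bbar (h*ω) = 1/2 * rsinc (h*ω/2) * Υ (h*ω) :=
    (hΥ₁ (h*ω) (by simp)).symm
  have h3 : b₁ 0 = Υ 0 := by
    have := hΥ₂ 0 (by simp)
    rw [← this]; norm_num
  have h4 : b₁ (h*ω) = Real.cos (h*ω/2) * Υ (h*ω) :=
    (hΥ₂ (h*ω) (by simp)).symm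
  intro Φhat
  induction j with
  | zero => intro x₀; simp
  | succ n ih =>
    intro x₀
    rw [Function.iterate_succ_apply, Function.iterate_succ_apply]
    have hΦ : Φhat (phiNL d₁ d₂ h ω Υ g (h/2) (phiL d₁ d₂ ω (h/2) x₀))
        = phiNL d₁ d₂ h ω Υ g (h/2) (phiL d₁ d₂ ω (h/2)
            (erkn d₁ d₂ h ω (1/2) bbar b₁ g x₀)) :=
      congrArg (phiNL d₁ d₂ h ω Υ g (h/2))
        (keystep d₁ d₂ h ω bbar b₁ Υ h1 h2 h3 h4 g x₀)
    rw [hΦ]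
    exact ih (erkn d₁ d₂ h ω (1/2) bbar b₁ g x₀)
end
end

section
/- (Closed form of the operator symbol L under symplecticity.) Let c₁ ∈ ℝ, and let ν ∈ ℝ satisfy sin ν ≠ 0 and cos((1−c₁)ν) ≠ 0. Set b₁ = cos((1−c₁)ν) and b̄₁ = (1−c₁)·sinc((1−c₁)ν) (the symplecticity coefficients with d₁* = 1, evaluated at ν). For z ∈ ℂ such that all denominators below are nonzero, define L₁(z) = (e^z − cos ν − ν²·sinc(ν)·(b̄₁/b₁)) / ((b̄₁/b₁)(e^z − cos ν) + sinc(ν)), L₂(z) = cos(c₁ν) + c₁·sinc(c₁ν)·L₁(z), and L(z) = (e^z − cos ν − sinc(ν)·L₁(z)) / (b̄₁·L₂(z)). Then L(z) = −2ν·(cos ν − cosh z)/sin ν. -/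
/-!
Write `θ = (1 - c₁) ν`, `w = e^z - cos ν` and `D = sin θ · w + sin ν · cos θ`. Every sinc factor
becomes `sin(·)/ν`, and clearing denominators gives `L₁ = ν (cos θ · w - sin ν sin θ) / D`.
The addition formulas for `ν = c₁ν + θ` collapse `L₂` to `sin ν · e^z / D`, so that
`L = ν (w² + sin² ν) / (sin ν · e^z)`; finally `w² + sin² ν = 2 e^z (cosh z - cos ν)`.
-/

noncomputable section

/-- `b₁` evaluated at `ν` under the symplecticity condition with `d₁* = 1`. -/
def b1c (c₁ ν : ℝ) : ℝ := Real.cos ((1 - c₁) * ν)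

/-- `b̄₁` evaluated at `ν` under the symplecticity condition with `d₁* = 1`. -/
def bbc (c₁ ν : ℝ) : ℝ := (1 - c₁) * rsinc ((1 - c₁) * ν)

/-- The operator symbol `L₁(z)`. -/
def L₁sym (c₁ ν : ℝ) (z : ℂ) : ℂ :=
  (Complex.exp z - (Real.cos ν : ℂ) - ((ν : ℂ) ^ 2) * (rsinc ν : ℂ) * ((bbc c₁ ν / b1c c₁ ν : ℝ) : ℂ))
    / (((bbc c₁ ν / b1c c₁ ν : ℝ) : ℂ) * (Complex.exp z - (Real.cos ν : ℂ)) + (rsinc ν : ℂ))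

/-- The operator symbol `L₂(z)`. -/
def L₂sym (c₁ ν : ℝ) (z : ℂ) : ℂ :=
  ((Real.cos (c₁ * ν) : ℝ) : ℂ) + ((c₁ * rsinc (c₁ * ν) : ℝ) : ℂ) * L₁sym c₁ ν z

/-- The operator symbol `L(z)`. -/
def Lsym (c₁ ν : ℝ) (z : ℂ) : ℂ :=
  (Complex.exp z - (Real.cos ν : ℂ) - (rsinc ν : ℂ) * L₁sym c₁ ν z)
    / (((bbc c₁ ν : ℝ) : ℂ) * L₂sym c₁ ν z)

lemma rsinc_of_ne_zero {x : ℝ} (hx : x ≠ 0) : rsinc x = Real.sin x / x := if_neg hx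

lemma mul_rsinc_mul (a : ℝ) {x : ℝ} (hx : x ≠ 0) : a * rsinc (a * x) = Real.sin (a * x) / x := by
  rcases eq_or_ne a 0 with rfl | ha
  · simp
  · rw [rsinc_of_ne_zero (mul_ne_zero ha hx)]
    field_simp

lemma bbc_eq {c₁ ν : ℝ} (hν : ν ≠ 0) : bbc c₁ ν = Real.sin ((1 - c₁) * ν) / ν :=
  mul_rsinc_mul _ hν

section
open Complex
variable {c₁ ν : ℝ} (z : ℂ)

lemma L₁sym_denom_eq (hν : ν ≠ 0) (hcos : Real.cos ((1 - c₁) * ν) ≠ 0) :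
    ((bbc c₁ ν / b1c c₁ ν : ℝ) : ℂ) * (exp z - Real.cos ν) + rsinc ν
      = (sin ((1 - c₁) * ν) * (exp z - cos ν) + sin ν * cos ((1 - c₁) * ν))
        / (cos ((1 - c₁) * ν) * ν) := by
  have hcos' : cos ((1 - c₁) * ν) ≠ 0 := by exact_mod_cast hcos
  rw [bbc_eq hν, rsinc_of_ne_zero hν, b1c]
  push_cast
  field_simp

lemma L₁sym_eq (hν : ν ≠ 0) (hcos : Real.cos ((1 - c₁) * ν) ≠ 0) :
    L₁sym c₁ ν z
      = ν * (cos ((1 - c₁) * ν) * (exp z - cos ν) - sin ν * sin ((1 - c₁) * ν))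
        / (sin ((1 - c₁) * ν) * (exp z - cos ν) + sin ν * cos ((1 - c₁) * ν)) := by
  have hν' : (ν : ℂ) ≠ 0 := by exact_mod_cast hν
  have hcos' : cos ((1 - c₁) * ν) ≠ 0 := by exact_mod_cast hcos
  rw [L₁sym, L₁sym_denom_eq z hν hcos, div_div_eq_mul_div]
  congr 1
  rw [bbc_eq hν, rsinc_of_ne_zero hν, b1c]
  push_cast
  generalize (1 - (c₁ : ℂ)) * ν = θ at *
  field_simp

lemma L₂sym_eq (hν : ν ≠ 0) (hcos : Real.cos ((1 - c₁) * ν) ≠ 0)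
    (hD : sin ((1 - c₁) * ν) * (exp z - cos ν) + sin ν * cos ((1 - c₁) * ν) ≠ 0) :
    L₂sym c₁ ν z
      = sin ν * exp z / (sin ((1 - c₁) * ν) * (exp z - cos ν) + sin ν * cos ((1 - c₁) * ν)) := by
  have hν' : (ν : ℂ) ≠ 0 := by exact_mod_cast hν
  have hsin_add :
      sin ν = sin (c₁ * ν) * cos ((1 - c₁) * ν) + cos (c₁ * ν) * sin ((1 - c₁) * ν) := by
    rw [← sin_add]; ring_nf
  have hcos_add :
      cos ν = cos (c₁ * ν) * cos ((1 - c₁) * ν) - sin (c₁ * ν) * sin ((1 - c₁) * ν) := by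
    rw [← cos_add]; ring_nf
  rw [L₂sym, L₁sym_eq z hν hcos, mul_rsinc_mul _ hν]
  push_cast
  generalize (1 - (c₁ : ℂ)) * ν = θ at *
  generalize hD_def : sin θ * (exp z - cos ν) + sin ν * cos θ = D at hD ⊢
  field_simp
  linear_combination -(exp z - cos ν) * hsin_add - sin ν * hcos_add - cos (c₁ * ν) * hD_def

lemma Lsym_eq (hν : ν ≠ 0) (hcos : Real.cos ((1 - c₁) * ν) ≠ 0)
    (hD : sin ((1 - c₁) * ν) * (exp z - cos ν) + sin ν * cos ((1 - c₁) * ν) ≠ 0)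
    (hsinθ : Real.sin ((1 - c₁) * ν) ≠ 0) (hsin : Real.sin ν ≠ 0) :
    Lsym c₁ ν z = ν * ((exp z - cos ν) ^ 2 + sin ν ^ 2) / (sin ν * exp z) := by
  have hν' : (ν : ℂ) ≠ 0 := by exact_mod_cast hν
  have hsin' : sin ν ≠ 0 := by exact_mod_cast hsin
  have hsinθ' : sin ((1 - c₁) * ν) ≠ 0 := by exact_mod_cast hsinθ
  rw [Lsym, L₂sym_eq z hν hcos hD, L₁sym_eq z hν hcos, bbc_eq hν, rsinc_of_ne_zero hν]
  push_cast
  generalize (1 - (c₁ : ℂ)) * ν = θ at *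
  generalize hD_def : sin θ * (exp z - cos ν) + sin ν * cos θ = D at hD ⊢
  field_simp
  linear_combination -(exp z - cos ν) * hD_def

lemma exp_sub_cos_sq_add_sin_sq (z w : ℂ) :
    (exp z - cos w) ^ 2 + sin w ^ 2 = 2 * exp z * (cosh z - cos w) := by
  have hcosh : 2 * exp z * cosh z = exp z ^ 2 + 1 := by
    rw [cosh, exp_neg]
    field_simp
  linear_combination sin_sq_add_cos_sq w - hcosh

end

/-- Closed form of the operator symbol `L` under the symplecticity
condition with `d₁* = 1`: `L(z) = −2ν(cos ν − cosh z)/sin ν`. -/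
theorem Lsym_closed_form (c₁ ν : ℝ) (hsin : Real.sin ν ≠ 0)
    (hcos : Real.cos ((1 - c₁) * ν) ≠ 0) (z : ℂ)
    (hden₁ : ((bbc c₁ ν / b1c c₁ ν : ℝ) : ℂ) * (Complex.exp z - (Real.cos ν : ℂ))
        + (rsinc ν : ℂ) ≠ 0)
    (hden₂ : ((bbc c₁ ν : ℝ) : ℂ) * L₂sym c₁ ν z ≠ 0) :
    Lsym c₁ ν z
      = -2 * (ν : ℂ) * ((Real.cos ν : ℂ) - Complex.cosh z) / (Real.sin ν : ℂ) := by
  have hν : ν ≠ 0 := by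
    rintro rfl
    simp at hsin
  have hD := (div_ne_zero_iff.mp (L₁sym_denom_eq z hν hcos ▸ hden₁)).1
  have hsinθ : Real.sin ((1 - c₁) * ν) ≠ 0 := by
    intro h
    apply hden₂
    simp [bbc_eq hν, h]
  have hsin' : Complex.sin ν ≠ 0 := by exact_mod_cast hsin
  rw [Lsym_eq z hν hcos hD hsinθ hsin, exp_sub_cos_sq_add_sin_sq]
  push_cast
  field_simp
  ring
end
end
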